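/- For any point x in the convex hull of an n-simplex σ, there exists a permutation (i₀,...,iₙ) of (0,...,n) such that x lies in the convex hull of the maximal subdivision simplex σ^{i₀⋯iₙ}; i.e., the geometric realizations of the maximal simplices of the barycentric subdivision cover |σ|. -/

import Mathlib

/-- Vertices `wᵏ = (1/(k+1))·∑_{j≤k} v^{π(j)}` of the maximal simplex of the
barycentric subdivision determined by the ordering `π`. -/
noncomputable def wVert (n : ℕ) (v : Fin (n + 1) → Fin n → ℝ)
    (π : Equiv.Perm (Fin (n + 1))) : Fin (n + 1) → Fin n → ℝ :=
  fun k => (1 / ((k : ℕ) + 1 : ℝ)) • ∑ j ∈ Finset.Iic k, v (π j)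

/-!
Write `x = ∑ cᵢ vⁱ` with `c` in the standard simplex and order the vertices so that the weights
decrease, `c_{π 0} ≥ ⋯ ≥ c_{π n}`, and put `c_{π (n+1)} := 0`. Abel summation gives
`x = ∑ₖ (k+1)(c_{π k} - c_{π (k+1)}) wᵏ`; these coefficients are nonnegative because of the
ordering, and they sum to `∑ cᵢ = 1` by the same summation applied to the constant vectors `1`.
-/

open Finset

theorem Finset.sum_range_smul_eq_add_sum_range_sub_smul {R M : Type*} [CommRing R] [AddCommGroup M]
    [Module R M] (b : ℕ → R) (u : ℕ → M) (N : ℕ) :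
    ∑ m ∈ range N, b m • u m =
      b N • ∑ j ∈ range N, u j + ∑ m ∈ range N, (b m - b (m + 1)) • ∑ j ∈ range (m + 1), u j := by
  induction N with
  | zero => simp
  | succ N ih =>
    rw [sum_range_succ, ih, sum_range_succ (fun m => (b m - b (m + 1)) • _), sum_range_succ u N]
    module

namespace Fin

variable {M : Type*} {n : ℕ}

def extendZero [Zero M] (f : Fin n → M) (m : ℕ) : M :=
  if h : m < n then f ⟨m, h⟩ else 0

@[simp]
theorem extendZero_val [Zero M] (f : Fin n → M) (k : Fin n) : extendZero f k = f k := by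
  simp [extendZero]

theorem extendZero_of_le [Zero M] (f : Fin n → M) {m : ℕ} (h : n ≤ m) : extendZero f m = 0 := by
  simp [extendZero, h]

theorem antitone_extendZero [Zero M] [Preorder M] {f : Fin n → M} (hf : Antitone f)
    (hf₀ : ∀ k, 0 ≤ f k) : Antitone (extendZero f) := by
  intro a b hab
  by_cases hb : b < n
  · simp only [extendZero, hb, lt_of_le_of_lt hab hb, dite_true]
    exact hf hab
  · rw [extendZero_of_le f (not_lt.1 hb)]
    unfold extendZero
    split_ifs
    exacts [hf₀ _, le_rfl]

theorem sum_univ_eq_sum_range_extendZero [AddCommMonoid M] (f : Fin n → M) :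
    ∑ k, f k = ∑ m ∈ range n, extendZero f m := by
  simpa using Fin.sum_univ_eq_sum_range (extendZero f) n

theorem sum_Iic_eq_sum_range_extendZero [AddCommMonoid M] (f : Fin n → M) (k : Fin n) :
    ∑ j ∈ Iic k, f j = ∑ m ∈ range (k + 1), extendZero f m := by
  rw [Nat.range_succ_eq_Iic, ← Fin.map_valEmbedding_Iic, sum_map]
  simp

end Fin

section ConvexHull

variable {E : Type*} [AddCommGroup E] [Module ℝ E]

theorem sum_range_smul_mem_convexHull_partialAverages (b : ℕ → ℝ) (u : ℕ → E) {N : ℕ}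
    (hb : Antitone b) (hbN : b N = 0) (hsum : ∑ m ∈ range N, b m = 1) :
    ∑ m ∈ range N, b m • u m ∈ convexHull ℝ
      ((fun m : ℕ => (1 / ((m : ℝ) + 1)) • ∑ j ∈ range (m + 1), u j) '' ↑(range N)) := by
  set d : ℕ → ℝ := fun m => ((m : ℝ) + 1) * (b m - b (m + 1))
  have hd₀ : ∀ m ∈ range N, 0 ≤ d m := fun m _ =>
    mul_nonneg (by positivity) (sub_nonneg.2 (hb m.le_succ))
  have hd₁ : ∑ m ∈ range N, d m = 1 := by
    have h := sum_range_smul_eq_add_sum_range_sub_smul b (fun _ => (1 : ℝ)) N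
    simp only [smul_eq_mul, mul_one, hbN, zero_mul, zero_add, sum_const, card_range,
      nsmul_eq_mul, Nat.cast_add, Nat.cast_one] at h
    rw [← hsum, h]
    exact sum_congr rfl fun m _ => mul_comm _ _
  have hx : ∑ m ∈ range N, b m • u m =
      ∑ m ∈ range N, d m • (1 / ((m : ℝ) + 1)) • ∑ j ∈ range (m + 1), u j := by
    rw [sum_range_smul_eq_add_sum_range_sub_smul, hbN, zero_smul, zero_add]
    refine sum_congr rfl fun m _ => ?_
    rw [smul_smul]
    congr 1
    simp only [d]
    field_simp
  rw [hx]
  exact (convex_convexHull ℝ _).sum_mem hd₀ hd₁ fun m hm =>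
    subset_convexHull ℝ _ (Set.mem_image_of_mem _ hm)

theorem sum_smul_mem_convexHull_partialAverages {n : ℕ} (c : Fin n → ℝ) (u : Fin n → E)
    (hc : Antitone c) (hc₀ : ∀ k, 0 ≤ c k) (hc₁ : ∑ k, c k = 1) :
    ∑ k, c k • u k ∈ convexHull ℝ
      (Set.range fun k : Fin n => (1 / ((k : ℕ) + 1 : ℝ)) • ∑ j ∈ Iic k, u j) := by
  have h := sum_range_smul_mem_convexHull_partialAverages (Fin.extendZero c) (Fin.extendZero u)
    (Fin.antitone_extendZero hc hc₀) (Fin.extendZero_of_le c le_rfl)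
    (by rwa [← Fin.sum_univ_eq_sum_range_extendZero])
  rw [← Fin.sum_univ_eq_sum_range (fun m => Fin.extendZero c m • Fin.extendZero u m)] at h
  simp only [Fin.extendZero_val] at h
  refine convexHull_mono ?_ h
  rintro _ ⟨m, hm, rfl⟩
  rw [mem_coe, mem_range] at hm
  exact ⟨⟨m, hm⟩, by dsimp only; rw [Fin.sum_Iic_eq_sum_range_extendZero]⟩

theorem exists_mem_stdSimplex_of_mem_convexHull_range {ι : Type*} [Fintype ι] {v : ι → E} {x : E}
    (hx : x ∈ convexHull ℝ (Set.range v)) : ∃ w ∈ stdSimplex ℝ ι, ∑ i, w i • v i = x := by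
  classical
  have hv : Set.range v = Fintype.linearCombination ℝ v '' Set.range fun i => Pi.single i 1 := by
    simp [← Set.range_comp, Function.comp_def, Fintype.linearCombination_apply_single]
  rw [hv, ← LinearMap.image_convexHull, convexHull_rangle_single_eq_stdSimplex] at hx
  obtain ⟨w, hw, rfl⟩ := hx
  exact ⟨w, hw, (Fintype.linearCombination_apply ℝ v w).symm⟩

end ConvexHull

theorem stmt_7_general (n : ℕ) (v : Fin (n + 1) → Fin n → ℝ) (x : Fin n → ℝ)
    (hx : x ∈ convexHull ℝ (Set.range v)) :
    ∃ π : Equiv.Perm (Fin (n + 1)),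
      x ∈ convexHull ℝ (Set.range (wVert n v π)) := by
  obtain ⟨c, ⟨hc₀, hc₁⟩, rfl⟩ := exists_mem_stdSimplex_of_mem_convexHull_range hx
  let π := Tuple.sort (OrderDual.toDual ∘ c)
  have hπ : Antitone (c ∘ π) := monotone_toDual_comp_iff.1 (Tuple.monotone_sort _)
  refine ⟨π, ?_⟩
  rw [← Equiv.sum_comp π]
  exact sum_smul_mem_convexHull_partialAverages (c ∘ π) (v ∘ π) hπ (fun k => hc₀ _)
    (by rw [← hc₁]; exact Equiv.sum_comp π c)

/-- The geometric realizations of the maximal simplices of the barycentric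
subdivision cover `|σ|`: every `x ∈ |σ|` lies in some `|σ^{i₀⋯iₙ}|`. -/
theorem stmt_7 (n : ℕ) (v : Fin (n + 1) → Fin n → ℝ)
    (hv : AffineIndependent ℝ v) (x : Fin n → ℝ)
    (hx : x ∈ convexHull ℝ (Set.range v)) :
    ∃ π : Equiv.Perm (Fin (n + 1)),
      x ∈ convexHull ℝ (Set.range (wVert n v π)) :=
  stmt_7_general n v x hx
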